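/- arXiv:1406.1737 — 2 statements merged into one kernel-verified Lean document; each statement's English description precedes it below -/
import Mathlib

section
/- Let U ⊆ S^n be open, f : U → ℝ^N a smooth map, and V open with compact closure contained in U. Then every iterated partial derivative ∂^α(Cf) of the cone map Cf(x) = |x| f(x/|x|) is polynomially bounded at 0 on C⁺V: for each multi-index α there exist constants C ∈ ℝ and m ∈ ℝ such that |∂^α(Cf)(x)| ≤ C·|x|^m for all x ∈ C⁺V. -/
open Set Metric

/-- The continuous linear equivalence given by scalar multiplication by a nonzero real. -/
noncomputable def smulCLE {E : Type*} [NormedAddCommGroup E] [NormedSpace ℝ E]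
    (t : ℝ) (ht : t ≠ 0) : E ≃L[ℝ] E where
  toFun x := t • x
  invFun x := t⁻¹ • x
  map_add' x y := smul_add t x y
  map_smul' c x := smul_comm t c x
  left_inv x := by simp [smul_smul, inv_mul_cancel₀ ht]
  right_inv x := by simp [smul_smul, mul_inv_cancel₀ ht]
  continuous_toFun := continuous_const_smul t
  continuous_invFun := continuous_const_smul t⁻¹

@[simp] lemma smulCLE_apply {E : Type*} [NormedAddCommGroup E] [NormedSpace ℝ E]
    (t : ℝ) (ht : t ≠ 0) (x : E) : smulCLE t ht x = t • x := rfl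

lemma smulCLE_opNorm_le {E : Type*} [NormedAddCommGroup E] [NormedSpace ℝ E]
    (t : ℝ) (ht : 0 < t) : ‖((smulCLE t ht.ne' : E ≃L[ℝ] E) : E →L[ℝ] E)‖ ≤ t := by
  apply ContinuousLinearMap.opNorm_le_bound _ ht.le
  intro y
  simp [norm_smul, Real.norm_eq_abs, abs_of_pos ht]

/-- Scaling bound for iterated derivatives of a `1`-homogeneous-type identity. -/
lemma iteratedFDeriv_scaling {E F : Type*} [NormedAddCommGroup E] [NormedSpace ℝ E]
    [NormedAddCommGroup F] [NormedSpace ℝ F]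
    (g : E → F) (k : ℕ) (t : ℝ) (ht : 0 < t)
    (hg : ∀ y, g y = t • g (t⁻¹ • y)) (x : E) :
    ‖iteratedFDeriv ℝ k g (t • x)‖ ≤ t * ((t⁻¹) ^ k * ‖iteratedFDeriv ℝ k g x‖) := by
  have ht0 : t ≠ 0 := ht.ne'
  have ht0' : (0:ℝ) < t⁻¹ := inv_pos.2 ht
  set eL : F ≃L[ℝ] F := smulCLE t ht0 with heL
  set eR : E ≃L[ℝ] E := smulCLE t⁻¹ (inv_ne_zero ht0) with heR
  have hfun : g = (⇑eL ∘ (g ∘ ⇑eR)) := by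
    funext y
    simp only [Function.comp_apply, heL, heR, smulCLE_apply]
    exact hg y
  have h1 : iteratedFDeriv ℝ k (⇑eL ∘ (g ∘ ⇑eR)) (t • x) =
      (eL : F →L[ℝ] F).compContinuousMultilinearMap
        (iteratedFDeriv ℝ k (g ∘ ⇑eR) (t • x)) := by
    simp only [← iteratedFDerivWithin_univ]
    exact eL.iteratedFDerivWithin_comp_left (g ∘ ⇑eR) uniqueDiffOn_univ (mem_univ _) k
  have h2 : iteratedFDeriv ℝ k (g ∘ ⇑eR) (t • x) =
      (iteratedFDeriv ℝ k g (eR (t • x))).compContinuousLinearMap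
        (fun _ => (eR : E →L[ℝ] E)) := by
    simp only [← iteratedFDerivWithin_univ]
    have h := eR.iteratedFDerivWithin_comp_right (s := univ) g uniqueDiffOn_univ
      (x := t • x) (mem_univ _) k
    simpa [Set.preimage_univ] using h
  have hRx : eR (t • x) = x := by
    simp only [heR, smulCLE_apply, smul_smul, inv_mul_cancel₀ ht0, one_smul]
  calc ‖iteratedFDeriv ℝ k g (t • x)‖
      = ‖(eL : F →L[ℝ] F).compContinuousMultilinearMap
          (iteratedFDeriv ℝ k (g ∘ ⇑eR) (t • x))‖ := by rw [← h1, ← hfun]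
    _ ≤ ‖(eL : F →L[ℝ] F)‖ * ‖iteratedFDeriv ℝ k (g ∘ ⇑eR) (t • x)‖ :=
        ContinuousLinearMap.norm_compContinuousMultilinearMap_le _ _
    _ ≤ t * ((t⁻¹) ^ k * ‖iteratedFDeriv ℝ k g x‖) := by
        apply mul_le_mul (smulCLE_opNorm_le t ht) _ (norm_nonneg _) ht.le
        rw [h2, hRx]
        calc ‖(iteratedFDeriv ℝ k g x).compContinuousLinearMap
              (fun _ => (eR : E →L[ℝ] E))‖
            ≤ ‖iteratedFDeriv ℝ k g x‖ * ∏ _i : Fin k, ‖(eR : E →L[ℝ] E)‖ :=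
              ContinuousMultilinearMap.norm_compContinuousLinearMap_le _ _
          _ ≤ ‖iteratedFDeriv ℝ k g x‖ * (t⁻¹) ^ k := by
              apply mul_le_mul_of_nonneg_left _ (norm_nonneg _)
              calc (∏ _i : Fin k, ‖(eR : E →L[ℝ] E)‖)
                  = ‖(eR : E →L[ℝ] E)‖ ^ k := by
                    simp [Finset.prod_const, Finset.card_univ]
                _ ≤ (t⁻¹) ^ k :=
                    pow_le_pow_left₀ (norm_nonneg _) (smulCLE_opNorm_le t⁻¹ ht0') k
          _ = (t⁻¹) ^ k * ‖iteratedFDeriv ℝ k g x‖ := mul_comm _ _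

/-- All iterated derivatives of the cone map `Cf x = ‖x‖ • f (‖x‖⁻¹ • x)`
are polynomially bounded at `0` on the punctured cone `C⁺V`: for each order `k` there
are constants `C, m : ℝ` with `‖D^k(Cf)(x)‖ ≤ C • ‖x‖^m` on `C⁺V`. -/
theorem cone_map_polynomially_bounded (n N : ℕ)
    (W : Set (EuclideanSpace ℝ (Fin (n+1)))) (hW : IsOpen W)
    (f : EuclideanSpace ℝ (Fin (n+1)) → EuclideanSpace ℝ (Fin N))
    (hf : ContDiffOn ℝ (⊤ : ℕ∞) f W)
    (U : Set (EuclideanSpace ℝ (Fin (n+1))))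
    (hU : U = W ∩ sphere (0 : EuclideanSpace ℝ (Fin (n+1))) 1)
    (V : Set (EuclideanSpace ℝ (Fin (n+1))))
    (hVopen : ∃ W' : Set (EuclideanSpace ℝ (Fin (n+1))), IsOpen W' ∧
      V = W' ∩ sphere (0 : EuclideanSpace ℝ (Fin (n+1))) 1)
    (hVU : closure V ⊆ U) (hVcpt : IsCompact (closure V))
    (Cf : EuclideanSpace ℝ (Fin (n+1)) → EuclideanSpace ℝ (Fin N))
    (hCf : ∀ x, Cf x = ‖x‖ • f (‖x‖⁻¹ • x)) :
    ∀ k : ℕ, ∃ C m : ℝ, ∀ v ∈ V, ∀ t : ℝ, 0 < t → t < 1 →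
      ‖iteratedFDeriv ℝ k Cf (t • v)‖ ≤ C * ‖t • v‖ ^ m := by
  intro k
  let E := EuclideanSpace ℝ (Fin (n+1))
  set g0 : E → E := fun x => ‖x‖⁻¹ • x with hg0def
  set O : Set E := {x : E | x ≠ 0} ∩ g0 ⁻¹' W with hOdef
  -- O is open
  have hg0cont : ContinuousOn g0 {x : E | x ≠ 0} := by
    exact ContinuousOn.smul
      ((continuous_norm.continuousOn).inv₀ (fun x hx => norm_ne_zero_iff.2 hx))
      continuous_id.continuousOn
  have hOopen : IsOpen O := hg0cont.isOpen_inter_preimage isOpen_ne hW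
  -- Cf is smooth on O
  have hCfO : ContDiffOn ℝ (⊤ : ℕ∞) Cf O := by
    have h1 : ContDiffOn ℝ (⊤ : ℕ∞) (fun x : E => ‖x‖) O := fun x hx =>
      (contDiffAt_norm (𝕜 := ℝ) hx.1).contDiffWithinAt
    have hg0smooth : ContDiffOn ℝ (⊤ : ℕ∞) g0 O :=
      (h1.inv (fun x hx => norm_ne_zero_iff.2 hx.1)).smul contDiffOn_id
    have h3 : ContDiffOn ℝ (⊤ : ℕ∞) (f ∘ g0) O := hf.comp hg0smooth (fun x hx => hx.2)
    exact (h1.smul h3).congr (fun x _ => hCf x)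
  -- closure V is inside O
  have hVO : closure V ⊆ O := by
    intro x hx
    have hxU := hVU hx
    rw [hU] at hxU
    have hx1 : ‖x‖ = 1 := by
      simpa using mem_sphere_zero_iff_norm.1 hxU.2
    have hxne : x ≠ 0 := by
      intro h; rw [h] at hx1; simp at hx1
    refine ⟨hxne, ?_⟩
    show g0 x ∈ W
    simp only [hg0def, hx1, inv_one, one_smul]
    exact hxU.1
  -- bound on the iterated derivative over closure V
  have hcontD : ContinuousOn (iteratedFDeriv ℝ k Cf) O := by
    have h := hCfO.continuousOn_iteratedFDerivWithin (m := k) (by exact_mod_cast le_top) hOopen.uniqueDiffOn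
    exact h.congr (fun x hx => (iteratedFDerivWithin_of_isOpen k hOopen hx).symm)
  obtain ⟨C, hC⟩ := hVcpt.exists_bound_of_continuousOn (hcontD.mono hVO)
  refine ⟨C, 1 - (k : ℝ), ?_⟩
  intro v hv t ht ht1
  have ht0 : t ≠ 0 := ht.ne'
  have hv1 : ‖v‖ = 1 := by
    have := hVU (subset_closure hv)
    rw [hU] at this
    simpa using mem_sphere_zero_iff_norm.1 this.2
  have hnorm : ‖t • v‖ = t := by
    rw [norm_smul, hv1, mul_one, Real.norm_eq_abs, abs_of_pos ht]
  -- homogeneity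
  have hhom : ∀ y : E, Cf y = t • Cf (t⁻¹ • y) := by
    intro y
    rcases eq_or_ne y 0 with rfl | hy
    · simp [hCf]
    · have hty : t⁻¹ • y ≠ 0 := smul_ne_zero (inv_ne_zero ht0) hy
      rw [hCf, hCf]
      have hn : ‖t⁻¹ • y‖ = t⁻¹ * ‖y‖ := by
        rw [norm_smul, Real.norm_eq_abs, abs_of_pos (inv_pos.2 ht)]
      rw [hn, smul_smul]
      have h1 : t * (t⁻¹ * ‖y‖) = ‖y‖ := by field_simp
      have h2 : (t⁻¹ * ‖y‖)⁻¹ • t⁻¹ • y = ‖y‖⁻¹ • y := by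
        rw [smul_smul]
        congr 1
        field_simp
      rw [h1, h2]
  have hbound := iteratedFDeriv_scaling Cf k t ht hhom v
  have hM : ‖iteratedFDeriv ℝ k Cf v‖ ≤ C := hC v (subset_closure hv)
  have hCnn : (0:ℝ) ≤ C := le_trans (norm_nonneg _) hM
  have hfinal : ‖iteratedFDeriv ℝ k Cf (t • v)‖ ≤ t * ((t⁻¹) ^ k * C) := by
    refine hbound.trans ?_
    apply mul_le_mul_of_nonneg_left _ ht.le
    exact mul_le_mul_of_nonneg_left hM (by positivity)
  refine hfinal.trans (le_of_eq ?_)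
  rw [hnorm, Real.rpow_sub ht, Real.rpow_one, Real.rpow_natCast, inv_pow,
    div_eq_mul_inv]
  ring
end

section
/- Let F : 𝔻 × P → ℝ^a × ℝ^b be of the form F(u, p) = (R(u), T(|u|, p)), where 𝔻 ⊂ ℝ^m is the open unit ball, P ⊂ ℝ^b is open, R : 𝔻 → ℝ^a is C¹, and T : [0,1) × P → ℝ^b is C¹. Then F is C¹ on (𝔻 ∖ {0}) × P, and if additionally ∂T/∂t(0, p) = 0 for all p and R is C¹ at 0, then F is C¹ on all of 𝔻 × P, with DF(0,p)(v, w) = (DR(0)v, ∂T/∂y(0,p)·w). -/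
/-!
Write `F = (R ∘ fst, G)` with `G (u, p) = T (‖u‖, p)`. Away from `u = 0`, `G` is a composition of
C¹ maps. At `u = 0` the norm is not differentiable, but `∂T/∂t (0, p) = 0` means that
`DT (0, p)` does not see the direction in which `‖u‖` moves, so `G` is still differentiable
there, with derivative `∂_y T (0, p) ∘ snd`. The candidate derivative
`DG (u, p) = DT (‖u‖, p) ∘ (D‖·‖ u × id)` is continuous at `u = 0` because `‖D‖·‖ u‖ ≤ 1`
and `DT (0, p)` annihilates the `D‖·‖ u` component.
-/

open Set Metric Topology Filter

theorem ContinuousLinearMap.apply_mk_eq_apply_zero_mk {𝕜 Y W : Type*} [NontriviallyNormedField 𝕜]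
    [NormedAddCommGroup Y] [NormedSpace 𝕜 Y] [NormedAddCommGroup W] [NormedSpace 𝕜 W]
    (L : 𝕜 × Y →L[𝕜] W) (hL : L (1, 0) = 0) (c : 𝕜) (w : Y) : L (c, w) = L (0, w) := by
  have hsplit : ((c, w) : 𝕜 × Y) = c • (1, 0) + (0, w) := by simp
  rw [hsplit, map_add, map_smul, hL, smul_zero, zero_add]

theorem ContinuousLinearMap.norm_prodMap_le {𝕜 E F G H : Type*} [NontriviallyNormedField 𝕜]
    [NormedAddCommGroup E] [NormedSpace 𝕜 E] [NormedAddCommGroup F] [NormedSpace 𝕜 F]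
    [NormedAddCommGroup G] [NormedSpace 𝕜 G] [NormedAddCommGroup H] [NormedSpace 𝕜 H]
    (f : E →L[𝕜] F) (g : G →L[𝕜] H) : ‖f.prodMap g‖ ≤ max ‖f‖ ‖g‖ :=
  ContinuousLinearMap.opNorm_le_bound _ (le_max_of_le_left (norm_nonneg _)) fun x =>
    max_le ((f.le_opNorm x.1).trans (by gcongr; exacts [le_max_left _ _, _root_.norm_fst_le x]))
      ((g.le_opNorm x.2).trans (by gcongr; exacts [le_max_right _ _, _root_.norm_snd_le x]))

theorem ContinuousWithinAt.clm_comp_of_norm_le {𝕜 X E F G : Type*} [NontriviallyNormedField 𝕜]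
    [TopologicalSpace X]
    [NormedAddCommGroup E] [NormedSpace 𝕜 E] [NormedAddCommGroup F] [NormedSpace 𝕜 F]
    [NormedAddCommGroup G] [NormedSpace 𝕜 G]
    {a : X → F →L[𝕜] G} {b : X → E →L[𝕜] F} {s : Set X} {x₀ : X} {C : ℝ}
    (ha : ContinuousWithinAt a s x₀) (hb : ∀ x, ‖b x‖ ≤ C)
    (hab : ∀ x, (a x₀).comp (b x) = (a x₀).comp (b x₀)) :
    ContinuousWithinAt (fun x => (a x).comp (b x)) s x₀ := by
  have hdiff : ∀ x, ‖(a x).comp (b x) - (a x₀).comp (b x₀)‖ ≤ ‖a x - a x₀‖ * C := fun x => by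
    rw [← hab x, ← ContinuousLinearMap.sub_comp]
    exact (ContinuousLinearMap.opNorm_comp_le _ _).trans
      (mul_le_mul_of_nonneg_left (hb x) (norm_nonneg _))
  have hlim : Tendsto (fun x => ‖a x - a x₀‖ * C) (𝓝[s] x₀) (𝓝 0) := by
    simpa using (tendsto_iff_norm_sub_tendsto_zero.1 ha).mul_const C
  exact tendsto_iff_norm_sub_tendsto_zero.2 (squeeze_zero (fun _ => norm_nonneg _) hdiff hlim)

theorem contDiffOn_one_of_hasFDerivAt {𝕜 E F : Type*} [NontriviallyNormedField 𝕜]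
    [NormedAddCommGroup E] [NormedSpace 𝕜 E] [NormedAddCommGroup F] [NormedSpace 𝕜 F]
    {g : E → F} {g' : E → E →L[𝕜] F} {s : Set E}
    (hs : IsOpen s) (hg : ∀ x ∈ s, HasFDerivAt g (g' x) x) (hg' : ContinuousOn g' s) :
    ContDiffOn 𝕜 1 g s :=
  (contDiffOn_succ_iff_hasFDerivWithinAt_of_uniqueDiffOn (n := 0) hs.uniqueDiffOn).2
    ⟨by simp, g', contDiffOn_zero.2 hg', fun x hx => (hg x hx).hasFDerivWithinAt⟩

theorem fderiv_norm_zero {E : Type*} [NormedAddCommGroup E] [NormedSpace ℝ E] :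
    fderiv ℝ (fun x : E => ‖x‖) 0 = 0 := by
  simpa using fderiv_norm_smul (0 : E) (0 : ℝ)

theorem norm_fderiv_norm_le_one {E : Type*} [NormedAddCommGroup E] [NormedSpace ℝ E] (u : E) :
    ‖fderiv ℝ (fun x : E => ‖x‖) u‖ ≤ 1 := by
  simpa using norm_fderiv_le_of_lipschitz ℝ (x₀ := u) lipschitzWith_one_norm

theorem mapsTo_norm_prod_ball_Ico {E Y : Type*} [SeminormedAddCommGroup E] {P : Set Y} :
    MapsTo (fun x : E × Y => (‖x.1‖, x.2)) (ball 0 1 ×ˢ P) (Ico 0 1 ×ˢ P) :=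
  fun _ hx => ⟨⟨norm_nonneg _, mem_ball_zero_iff.1 hx.1⟩, hx.2⟩

section

variable {E Y W : Type*} [NormedAddCommGroup E] [InnerProductSpace ℝ E]
  [NormedAddCommGroup Y] [NormedSpace ℝ Y] [NormedAddCommGroup W] [NormedSpace ℝ W]
  {f : ℝ × Y → W} {L : ℝ × Y →L[ℝ] W} {P : Set Y}

theorem HasFDerivWithinAt.hasDerivWithinAt_comp_mk_left {s : Set ℝ} {t : ℝ} {p : Y}
    (hf : HasFDerivWithinAt f L (s ×ˢ P) (t, p)) (hp : p ∈ P) :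
    HasDerivWithinAt (fun t => f (t, p)) (L (1, 0)) s t :=
  have h : HasFDerivWithinAt (fun t => f (t, p)) (L.comp (.inl ℝ ℝ Y)) s t :=
    hf.comp t (hasFDerivAt_prodMk_left t p).hasFDerivWithinAt fun _ ht => mk_mem_prod ht hp
  h.hasDerivWithinAt

theorem HasFDerivWithinAt.hasFDerivAt_comp_mk_right {s : Set ℝ} {t : ℝ} {p : Y}
    (hf : HasFDerivWithinAt f L (s ×ˢ P) (t, p)) (ht : t ∈ s) (hP : P ∈ 𝓝 p) :
    HasFDerivAt (fun y => f (t, y)) (L.comp (.inr ℝ ℝ Y)) p :=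
  (hf.comp p (hasFDerivAt_prodMk_right t p).hasFDerivWithinAt
    fun _ hy => ⟨ht, hy⟩).hasFDerivAt hP

theorem derivWithin_Ici_comp_mk_zero (hf : ContDiffOn ℝ 1 f (Ico 0 1 ×ˢ P)) {p : Y}
    (hp : p ∈ P) :
    derivWithin (fun t => f (t, p)) (Ici 0) 0 =
      fderivWithin ℝ f (Ico 0 1 ×ˢ P) (0, p) (1, 0) := by
  have hmem : ((0 : ℝ), p) ∈ Ico 0 1 ×ˢ P := ⟨left_mem_Ico.2 one_pos, hp⟩
  have hslice := (hf.differentiableOn one_ne_zero _ hmem).hasFDerivWithinAt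
    |>.hasDerivWithinAt_comp_mk_left hp
  exact (hslice.mono_of_mem_nhdsWithin (Ico_mem_nhdsGE one_pos)).derivWithin
    (uniqueDiffOn_Ici 0 0 self_mem_Ici)

theorem hasFDerivAt_comp_norm_prod_of_ne {u : E} {p : Y} (hu : u ≠ 0)
    (hf : HasFDerivAt f L (‖u‖, p)) :
    HasFDerivAt (fun x : E × Y => f (‖x.1‖, x.2))
      (L.comp ((fderiv ℝ (fun x : E => ‖x‖) u).prodMap (.id ℝ Y))) (u, p) :=
  hf.comp (u, p) (((contDiffAt_norm ℝ hu).differentiableAt one_ne_zero).hasFDerivAt.prodMap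
    (u, p) (hasFDerivAt_id p))

theorem hasFDerivAt_comp_norm_prod_zero {s : Set (ℝ × Y)} {p : Y}
    (hf : HasFDerivWithinAt f L s (0, p))
    (hs : ∀ᶠ x in 𝓝 ((0 : E), p), (‖x.1‖, x.2) ∈ s) (hL : L (1, 0) = 0) :
    HasFDerivAt (fun x : E × Y => f (‖x.1‖, x.2))
      (L.comp ((fderiv ℝ (fun x : E => ‖x‖) 0).prodMap (.id ℝ Y))) (0, p) := by
  -- `L` does not see the first coordinate of `ρ x - (0, p)`, and `ρ` preserves distances
  -- to `(0, p)`, so the remainder of `f` along `ρ` is still `o(‖x - (0, p)‖)`.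
  set ρ : E × Y → ℝ × Y := fun x => (‖x.1‖, x.2)
  have hρ : Tendsto ρ (𝓝 (0, p)) (𝓝[s] (0, p)) := by
    refine tendsto_nhdsWithin_iff.2 ⟨?_, hs⟩
    simpa [ρ] using ((continuous_norm.comp continuous_fst).prodMk continuous_snd).tendsto
      ((0 : E), p)
  have hρ_dist : ∀ x, ‖ρ x - (0, p)‖ = ‖x - (0, p)‖ := fun x => by
    simp [ρ, Prod.norm_def]
  have hρ_lin : ∀ x, L (ρ x - (0, p)) = L (0, x.2 - p) := fun x =>
    L.apply_mk_eq_apply_zero_mk hL _ _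
  have hlo := (hf.isLittleO.comp_tendsto hρ).trans_isBigO
    (Asymptotics.isBigO_of_le (𝓝 ((0 : E), p)) fun x => (hρ_dist x).le)
  rw [fderiv_norm_zero]
  exact HasFDerivAt.of_isLittleO (hlo.congr_left fun x => by
    simp only [Function.comp_apply, hρ_lin, norm_zero]
    rfl)

theorem contDiffOn_comp_norm_prod_of_ne (hP : IsOpen P)
    (hf : ContDiffOn ℝ 1 f (Ico 0 1 ×ˢ P)) :
    ContDiffOn ℝ 1 (fun x : E × Y => f (‖x.1‖, x.2)) ((ball 0 1 \ {0}) ×ˢ P) := by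
  rintro ⟨u, p⟩ ⟨⟨hu1, hu0 : u ≠ 0⟩, hp⟩
  have hfu : ContDiffAt ℝ 1 f (‖u‖, p) := hf.contDiffAt <|
    prod_mem_nhds (Ico_mem_nhds (norm_pos_iff.2 hu0) (mem_ball_zero_iff.1 hu1)) (hP.mem_nhds hp)
  exact (hfu.comp (u, p) (((contDiffAt_norm ℝ hu0).comp (u, p) contDiffAt_fst).prodMk
    contDiffAt_snd)).contDiffWithinAt

-- At `u = 0` the formula uses the junk value `fderiv ℝ ‖·‖ 0 = 0`, which is the right factor there.
theorem hasFDerivAt_comp_norm_prod (hP : IsOpen P) (hf : ContDiffOn ℝ 1 f (Ico 0 1 ×ˢ P))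
    (h0 : ∀ p ∈ P, fderivWithin ℝ f (Ico 0 1 ×ˢ P) (0, p) (1, 0) = 0)
    {x : E × Y} (hx : x ∈ ball 0 1 ×ˢ P) :
    HasFDerivAt (fun x : E × Y => f (‖x.1‖, x.2))
      ((fderivWithin ℝ f (Ico 0 1 ×ˢ P) (‖x.1‖, x.2)).comp
        ((fderiv ℝ (fun x : E => ‖x‖) x.1).prodMap (.id ℝ Y))) x := by
  obtain ⟨u, p⟩ := x
  obtain ⟨hu1 : u ∈ ball 0 1, hp : p ∈ P⟩ := hx
  have hmem : (‖u‖, p) ∈ Ico (0 : ℝ) 1 ×ˢ P := ⟨⟨norm_nonneg u, mem_ball_zero_iff.1 hu1⟩, hp⟩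
  have hfu := (hf.differentiableOn one_ne_zero _ hmem).hasFDerivWithinAt
  rcases eq_or_ne u 0 with rfl | hu0
  · rw [norm_zero] at hfu ⊢
    refine hasFDerivAt_comp_norm_prod_zero hfu ?_ (h0 p hp)
    filter_upwards [(isOpen_ball.prod hP).mem_nhds (mk_mem_prod hu1 hp)] with y hy
    exact mapsTo_norm_prod_ball_Ico hy
  · exact hasFDerivAt_comp_norm_prod_of_ne hu0 (hfu.hasFDerivAt (prod_mem_nhds
      (Ico_mem_nhds (norm_pos_iff.2 hu0) (mem_ball_zero_iff.1 hu1)) (hP.mem_nhds hp)))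

theorem continuousOn_fderivWithin_comp_norm_prod (hP : IsOpen P)
    (hf : ContDiffOn ℝ 1 f (Ico 0 1 ×ˢ P))
    (h0 : ∀ p ∈ P, fderivWithin ℝ f (Ico 0 1 ×ˢ P) (0, p) (1, 0) = 0) :
    ContinuousOn (fun x : E × Y => (fderivWithin ℝ f (Ico 0 1 ×ˢ P) (‖x.1‖, x.2)).comp
      ((fderiv ℝ (fun x : E => ‖x‖) x.1).prodMap (.id ℝ Y))) (ball 0 1 ×ˢ P) := by
  have hM : ContinuousOn (fun x : E × Y => fderivWithin ℝ f (Ico 0 1 ×ˢ P) (‖x.1‖, x.2))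
      (ball 0 1 ×ˢ P) :=
    (hf.continuousOn_fderivWithin ((uniqueDiffOn_Ico 0 1).prod hP.uniqueDiffOn) le_rfl).comp
      ((continuous_norm.comp continuous_fst).prodMk continuous_snd).continuousOn
      mapsTo_norm_prod_ball_Ico
  rintro ⟨u, p⟩ hx
  rcases eq_or_ne u 0 with rfl | hu0
  · have hL : fderivWithin ℝ f (Ico 0 1 ×ˢ P) (‖(0 : E)‖, p) (1, 0) = 0 := by
      simpa using h0 p hx.2
    refine (hM _ hx).clm_comp_of_norm_le (C := 1) (fun x => ?_) (fun x => ?_)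
    · exact (ContinuousLinearMap.norm_prodMap_le _ _).trans
        (max_le (norm_fderiv_norm_le_one _) ContinuousLinearMap.norm_id_le)
    · exact ContinuousLinearMap.ext fun z =>
        (ContinuousLinearMap.apply_mk_eq_apply_zero_mk _ hL _ _).trans
          (ContinuousLinearMap.apply_mk_eq_apply_zero_mk _ hL _ _).symm
  · have hΨ : ContinuousAt
        (fun x : E × Y => (fderiv ℝ (fun x : E => ‖x‖) x.1).prodMap (.id ℝ Y)) (u, p) :=
      (ContinuousLinearMap.prodMapL ℝ E ℝ Y Y).continuous.continuousAt.comp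
        ((((contDiffAt_norm ℝ hu0).continuousAt_fderiv one_ne_zero).comp continuousAt_fst).prodMk
          continuousAt_const)
    exact (hM _ hx).clm_comp hΨ.continuousWithinAt

theorem contDiffOn_comp_norm_prod (hP : IsOpen P) (hf : ContDiffOn ℝ 1 f (Ico 0 1 ×ˢ P))
    (h0 : ∀ p ∈ P, fderivWithin ℝ f (Ico 0 1 ×ˢ P) (0, p) (1, 0) = 0) :
    ContDiffOn ℝ 1 (fun x : E × Y => f (‖x.1‖, x.2)) (ball 0 1 ×ˢ P) :=
  contDiffOn_one_of_hasFDerivAt (isOpen_ball.prod hP)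
    (fun _ hx => hasFDerivAt_comp_norm_prod hP hf h0 hx)
    (continuousOn_fderivWithin_comp_norm_prod hP hf h0)

theorem fderiv_comp_norm_prod_zero_apply (hP : IsOpen P)
    (hf : ContDiffOn ℝ 1 f (Ico 0 1 ×ˢ P))
    (h0 : ∀ p ∈ P, fderivWithin ℝ f (Ico 0 1 ×ˢ P) (0, p) (1, 0) = 0) {p : Y} (hp : p ∈ P)
    (v : E) (w : Y) :
    fderiv ℝ (fun x : E × Y => f (‖x.1‖, x.2)) (0, p) (v, w) =
      fderiv ℝ (fun y => f (0, y)) p w := by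
  have hmem : ((0 : ℝ), p) ∈ Ico 0 1 ×ˢ P := ⟨left_mem_Ico.2 one_pos, hp⟩
  have hslice := ((hf.differentiableOn one_ne_zero _ hmem).hasFDerivWithinAt
    |>.hasFDerivAt_comp_mk_right (left_mem_Ico.2 one_pos) (hP.mem_nhds hp))
  rw [(hasFDerivAt_comp_norm_prod hP hf h0 (mk_mem_prod (mem_ball_self one_pos) hp)).fderiv,
    hslice.fderiv]
  simp only [norm_zero, fderiv_norm_zero]
  rfl

end

/-- a map `F(u,p) = (R u, T (‖u‖, p))` with `R` C¹ on the ball and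
`T` C¹ on `[0,1) × P` is C¹ away from `u = 0`; if moreover `∂T/∂t (0,p) = 0` for
all `p` and `R` is C¹ at `0`, then `F` is C¹ on the whole ball times `P`, with
`DF(0,p)(v,w) = (DR(0)v, ∂_y T(0,p) w)`. -/
theorem split_chart_transition_C1 (m a b : ℕ)
    (P : Set (EuclideanSpace ℝ (Fin b))) (hP : IsOpen P)
    (R : EuclideanSpace ℝ (Fin m) → EuclideanSpace ℝ (Fin a))
    (T : ℝ → EuclideanSpace ℝ (Fin b) → EuclideanSpace ℝ (Fin b))
    (hR : ContDiffOn ℝ 1 R (ball (0 : EuclideanSpace ℝ (Fin m)) 1))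
    (hT : ContDiffOn ℝ 1 (fun q : ℝ × EuclideanSpace ℝ (Fin b) => T q.1 q.2)
      ((Ico (0:ℝ) 1) ×ˢ P))
    (F : EuclideanSpace ℝ (Fin m) × EuclideanSpace ℝ (Fin b) →
      EuclideanSpace ℝ (Fin a) × EuclideanSpace ℝ (Fin b))
    (hF : ∀ x, F x = (R x.1, T ‖x.1‖ x.2)) :
    ContDiffOn ℝ 1 F ((ball (0 : EuclideanSpace ℝ (Fin m)) 1 \ {0}) ×ˢ P) ∧
    ((∀ p ∈ P, derivWithin (fun t => T t p) (Ici 0) 0 = 0) →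
      ContDiffAt ℝ 1 R 0 →
      (ContDiffOn ℝ 1 F ((ball (0 : EuclideanSpace ℝ (Fin m)) 1) ×ˢ P) ∧
        ∀ p ∈ P, ∀ (v : EuclideanSpace ℝ (Fin m)) (w : EuclideanSpace ℝ (Fin b)),
          fderiv ℝ F (0, p) (v, w) =
            (fderiv ℝ R 0 v, fderiv ℝ (fun y => T 0 y) p w))) := by
  obtain rfl : F = fun x => (R x.1, T ‖x.1‖ x.2) := funext hF
  have hR_fst : ContDiffOn ℝ 1 (fun x : _ × EuclideanSpace ℝ (Fin b) => R x.1) (ball 0 1 ×ˢ P) :=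
    hR.comp contDiffOn_fst fun _ hx => hx.1
  refine ⟨(hR_fst.mono (prod_mono sdiff_subset subset_rfl)).prodMk
    (contDiffOn_comp_norm_prod_of_ne hP hT), fun hT₀ hR₀ => ?_⟩
  have h0 : ∀ p ∈ P, fderivWithin ℝ (fun q => T q.1 q.2) (Ico 0 1 ×ˢ P) (0, p) (1, 0) = 0 :=
    fun p hp => (derivWithin_Ici_comp_mk_zero hT hp).symm.trans (hT₀ p hp)
  refine ⟨hR_fst.prodMk (contDiffOn_comp_norm_prod hP hT h0), fun p hp v w => ?_⟩
  have hmem : ((0 : EuclideanSpace ℝ (Fin m)), p) ∈ ball 0 1 ×ˢ P := ⟨mem_ball_self one_pos, hp⟩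
  have hR_fst_deriv : HasFDerivAt (fun x : _ × EuclideanSpace ℝ (Fin b) => R x.1)
      ((fderiv ℝ R 0).comp (.fst ℝ _ _)) (0, p) :=
    (hR₀.differentiableAt one_ne_zero).hasFDerivAt.comp (f := Prod.fst) _ hasFDerivAt_fst
  rw [DifferentiableAt.fderiv_prodMk hR_fst_deriv.differentiableAt
    (hasFDerivAt_comp_norm_prod hP hT h0 hmem).differentiableAt, ContinuousLinearMap.prod_apply,
    hR_fst_deriv.fderiv, fderiv_comp_norm_prod_zero_apply hP hT h0 hp]
  rfl
end
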